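/- The composite $FG$ is algebraically compact if and only if $GF$ is algebraically compact. -/

import Mathlib

/-!
A `G ⋙ F`-algebra `a : F G A → A` rolls to the `F ⋙ G`-algebra `G a : G F (G A) → G A`.
Algebra maps from it to `b : G F B → B` correspond to algebra maps `A → F B`, via `f ↦ G f ≫ b`
and `m ↦ a⁻¹ ≫ F m`, where `a` is invertible by Lambek's lemma once `A` is initial. So rolling
preserves initial algebras, and dually final coalgebras; applying `G` to `a` and its inverse `ω`
therefore rolls an algebraically compact structure for `G ⋙ F` into one for `F ⋙ G`.
-/

open CategoryTheory CategoryTheory.Limits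

universe v v₂ u u₂

/-- An endofunctor is algebraically compact if it has an initial algebra whose structure
map is an isomorphism and whose inverse is a final coalgebra. -/
def AlgebraicallyCompact {C : Type u} [Category.{v} C] (T : C ⥤ C) : Prop :=
  ∃ (A : Endofunctor.Algebra T) (ω : A.a ⟶ T.obj A.a),
    Nonempty (IsInitial A) ∧ A.str ≫ ω = 𝟙 _ ∧ ω ≫ A.str = 𝟙 _ ∧
    Nonempty (IsTerminal (⟨A.a, ω⟩ : Endofunctor.Coalgebra T))

namespace CategoryTheory.Endofunctor

variable {C : Type u} [Category.{v} C] {D : Type u₂} [Category.{v₂} D]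
  (F : C ⥤ D) (G : D ⥤ C)

namespace Algebra

abbrev roll (A : Algebra (G ⋙ F)) : Algebra (F ⋙ G) := ⟨G.obj A.a, G.map A.str⟩

variable {F G} {A : Algebra (G ⋙ F)} {B : Algebra (F ⋙ G)}

def rollHom (f : A ⟶ B.roll G F) : A.roll F G ⟶ B where
  f := G.map f.f ≫ B.str
  h := by
    have hf : F.map (G.map f.f) ≫ F.map B.str = A.str ≫ f.f := f.h
    change G.map (F.map (G.map f.f ≫ B.str)) ≫ B.str = _
    rw [F.map_comp, hf, G.map_comp, Category.assoc]

theorem map_inv_str_comp_map_comp_str [IsIso A.str] (m : A.roll F G ⟶ B) :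
    G.map (inv A.str ≫ F.map m.f) ≫ B.str = m.f := by
  have hm : G.map (F.map m.f) ≫ B.str = G.map A.str ≫ m.f := m.h
  rw [G.map_comp, Category.assoc, hm, ← G.map_comp_assoc, IsIso.inv_hom_id, G.map_id,
    Category.id_comp]

noncomputable def unrollHom [IsIso A.str] (m : A.roll F G ⟶ B) : A ⟶ B.roll G F where
  f := inv A.str ≫ F.map m.f
  h := by
    rw [Functor.comp_map, ← F.map_comp, map_inv_str_comp_map_comp_str, IsIso.hom_inv_id_assoc]

theorem rollHom_unrollHom [IsIso A.str] (m : A.roll F G ⟶ B) : rollHom (unrollHom m) = m :=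
  Hom.ext (map_inv_str_comp_map_comp_str m)

noncomputable def isInitialRoll (hA : IsInitial A) : IsInitial (A.roll F G) :=
  have := Initial.str_isIso hA
  IsInitial.ofUniqueHom (fun B => rollHom (hA.to (B.roll G F))) fun _ m => by
    rw [← rollHom_unrollHom m, hA.hom_ext (unrollHom m)]

end Algebra

namespace Coalgebra

abbrev roll (V : Coalgebra (G ⋙ F)) : Coalgebra (F ⋙ G) := ⟨G.obj V.V, G.map V.str⟩

variable {F G} {V : Coalgebra (G ⋙ F)} {B : Coalgebra (F ⋙ G)}

def rollHom (f : B.roll G F ⟶ V) : B ⟶ V.roll F G where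
  f := B.str ≫ G.map f.f
  h := by
    have hf : F.map B.str ≫ F.map (G.map f.f) = f.f ≫ V.str := f.h
    change B.str ≫ G.map (F.map (B.str ≫ G.map f.f)) = _
    rw [F.map_comp, hf, G.map_comp, ← Category.assoc]

theorem str_comp_map_map_comp_inv_str [IsIso V.str] (m : B ⟶ V.roll F G) :
    B.str ≫ G.map (F.map m.f ≫ inv V.str) = m.f := by
  have hm : B.str ≫ G.map (F.map m.f) = m.f ≫ G.map V.str := m.h
  rw [G.map_comp, reassoc_of% hm, ← G.map_comp, IsIso.hom_inv_id, G.map_id, Category.comp_id]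

noncomputable def unrollHom [IsIso V.str] (m : B ⟶ V.roll F G) : B.roll G F ⟶ V where
  f := F.map m.f ≫ inv V.str
  h := by
    rw [Functor.comp_map, ← F.map_comp, str_comp_map_map_comp_inv_str, Category.assoc,
      IsIso.inv_hom_id, Category.comp_id]

theorem rollHom_unrollHom [IsIso V.str] (m : B ⟶ V.roll F G) : rollHom (unrollHom m) = m :=
  Hom.ext (str_comp_map_map_comp_inv_str m)

noncomputable def isTerminalRoll (hV : IsTerminal V) : IsTerminal (V.roll F G) :=
  have := Terminal.str_isIso hV
  IsTerminal.ofUniqueHom (fun B => rollHom (hV.from (B.roll G F))) fun _ m => by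
    rw [← rollHom_unrollHom m, hV.hom_ext (unrollHom m)]

end Coalgebra

end CategoryTheory.Endofunctor

open CategoryTheory.Endofunctor in
theorem AlgebraicallyCompact.roll {C : Type u} [Category.{v} C] {D : Type u₂} [Category.{v₂} D]
    {F : C ⥤ D} {G : D ⥤ C} :
    AlgebraicallyCompact (G ⋙ F) → AlgebraicallyCompact (F ⋙ G) := by
  rintro ⟨A, ω, ⟨hA⟩, hAω, hωA, ⟨hω⟩⟩
  refine ⟨A.roll F G, G.map ω, ⟨Algebra.isInitialRoll hA⟩, ?_, ?_,
    ⟨Coalgebra.isTerminalRoll (V := ⟨A.a, ω⟩) hω⟩⟩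
  · simp [← G.map_comp, hAω]
  · simp [← G.map_comp, hωA]

/-- In diagrammatic order, `FG = G ⋙ F` and `GF = F ⋙ G`. -/
theorem algCompact_iff {C : Type u} [Category.{v} C] {D : Type u₂} [Category.{v₂} D]
    (F : C ⥤ D) (G : D ⥤ C) :
    AlgebraicallyCompact (G ⋙ F) ↔ AlgebraicallyCompact (F ⋙ G) :=
  ⟨AlgebraicallyCompact.roll, AlgebraicallyCompact.roll⟩
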